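/- arXiv:1801.10440 — 2 statements merged into one kernel-verified Lean document; each statement's English description precedes it below -/
import Mathlib

section
/- Let γ : ℝ → ℝ² be C² with |γ'(s)| = 1 for all s, set ν(s) = (γ₂'(s), −γ₁'(s), 0) ∈ ℝ³, and let κ : ℝ → ℝ satisfy (γ₂''(s), −γ₁''(s)) = κ(s)·γ'(s) for all s. Let a, b : ℝ³ → ℂ³ be C¹ on an open neighborhood of the cylindrical surface S = {(γ₁(s), γ₂(s), t) : s, t ∈ ℝ}, and suppose that for all s, t the normal components vanish: Σₖ aₖ(γ(s), t)·νₖ(s) = 0 and Σₖ bₖ(γ(s), t)·νₖ(s) = 0. Then at every point x = (γ(s), t), one has Σₖ νₖ(s)·aₖ(x)·conj((div b)(x)) − Σⱼₖ νⱼ(s)·aₖ(x)·conj((∂ₖbⱼ)(x)) = κ(s)·(a₁(x)·conj(b₁(x)) + a₂(x)·conj(b₂(x))). -/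
noncomputable section

open MeasureTheory Real Complex

/-- Points of `ℝ³`. -/
abbrev V3 := Fin 3 → ℝ
/-- Vectors of `ℂ³`. -/
abbrev C3 := Fin 3 → ℂ

/-- Partial derivative `∂ⱼ` of a complex scalar function on `ℝ³`. -/
def pd (j : Fin 3) (f : V3 → ℂ) (x : V3) : ℂ := fderiv ℝ f x (Pi.single j 1)

/-- Partial derivative `∂ⱼ` of a real scalar function on `ℝ³`. -/
def pdR (j : Fin 3) (f : V3 → ℝ) (x : V3) : ℝ := fderiv ℝ f x (Pi.single j 1)

/-- Partial derivative `∂ⱼ` of a vector field, taken componentwise. -/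
def pdV (j : Fin 3) (a : V3 → C3) (x : V3) : C3 := fun i => pd j (fun y => a y i) x

/-- curl a = (∂₂a₃ − ∂₃a₂, ∂₃a₁ − ∂₁a₃, ∂₁a₂ − ∂₂a₁)  (indices 0,1,2). -/
def vcurl (a : V3 → C3) (x : V3) : C3 :=
  ![pd 1 (fun y => a y 2) x - pd 2 (fun y => a y 1) x,
    pd 2 (fun y => a y 0) x - pd 0 (fun y => a y 2) x,
    pd 0 (fun y => a y 1) x - pd 1 (fun y => a y 0) x]

/-- div a = ∂₁a₁ + ∂₂a₂ + ∂₃a₃. -/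
def vdiv (a : V3 → C3) (x : V3) : ℂ := ∑ j, pd j (fun y => a y j) x

/-- The bilinear (unconjugated) cross product on ℂ³. -/
def cross (a b : C3) : C3 :=
  ![a 1 * b 2 - a 2 * b 1, a 2 * b 0 - a 0 * b 2, a 0 * b 1 - a 1 * b 0]

/-- The Hermitian inner product ⟨a, b⟩ = Σⱼ aⱼ · conj(bⱼ). -/
def hinner (a b : C3) : ℂ := ∑ j, a j * (starRingEnd ℂ) (b j)

/-- The gradient of a real function, viewed as a complex vector. -/
def gradC (g : V3 → ℝ) (x : V3) : C3 := fun j => (pdR j g x : ℂ)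

/-- The Laplacian Δg = ∂₁²g + ∂₂²g + ∂₃²g of a real function. -/
def lapR (g : V3 → ℝ) (x : V3) : ℝ := ∑ j, pdR j (fun y => pdR j g y) x

/-- The solid infinite circular cylinder Π of radius `R`. -/
def Cyl (R : ℝ) : Set V3 := {x | x 0 ^ 2 + x 1 ^ 2 < R ^ 2}

/-- The boundary ∂Π of the cylinder. -/
def bCyl (R : ℝ) : Set V3 := {x | x 0 ^ 2 + x 1 ^ 2 = R ^ 2}

/-- The outward unit normal of the cylinder at a boundary point. -/
def nuR (R : ℝ) (x : V3) : V3 := ![x 0 / R, x 1 / R, 0]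

/-- The outward unit normal, viewed as a complex vector. -/
def nuC (R : ℝ) (x : V3) : C3 := fun j => (nuR R x j : ℂ)

/-- The normal component ⟨z, ν⟩ of z ∈ ℂ³ at a boundary point of the cylinder. -/
def ncomp (R : ℝ) (x : V3) (z : C3) : ℂ := ∑ k, z k * (nuR R x k : ℂ)

/-- The normal derivative ∂_ν g = ⟨∇g, ν⟩ of a real function at a boundary point. -/
def dnu (R : ℝ) (g : V3 → ℝ) (x : V3) : ℝ := ∑ k, pdR k g x * nuR R x k

/-- The surface integral ∫_{∂Π} F dS = ∫_ℝ ∫₀^{2π} F(R cos θ, R sin θ, t)·R dθ dt. -/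
def surfInt (R : ℝ) (F : V3 → ℂ) : ℂ :=
  ∫ t : ℝ, ∫ θ in (0:ℝ)..(2 * π), F ![R * Real.cos θ, R * Real.sin θ, t] * (R : ℂ)

/-- `f` is `C^k` up to the boundary of the open set `S`: it is `k` times continuously
differentiable on an open neighborhood of the closure of `S`. -/
def UpTo {E : Type*} [NormedAddCommGroup E] [NormedSpace ℝ E]
    (k : ℕ) (S : Set V3) (f : V3 → E) : Prop :=
  ∃ U : Set V3, IsOpen U ∧ closure S ⊆ U ∧ ContDiffOn ℝ k f U

/-- `f` has compact axial support: it vanishes whenever `|x₃| ≥ T` for some `T > 0`. -/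
def AxialSupp {E : Type*} [Zero E] (f : V3 → E) : Prop :=
  ∃ T > 0, ∀ x : V3, T ≤ |x 2| → f x = 0

/-- The matrix W₀(μ)ⱼₖ = μ⁻¹(Δμ)δⱼₖ + μ⁻²(∂ⱼμ)(∂ₖμ) − μ⁻¹∂ⱼ∂ₖμ. -/
def W0 (μ : V3 → ℝ) (x : V3) (j k : Fin 3) : ℝ :=
  (μ x)⁻¹ * lapR μ x * (if j = k then 1 else 0)
    + ((μ x) ^ 2)⁻¹ * pdR j μ x * pdR k μ x
    - (μ x)⁻¹ * pdR j (fun y => pdR k μ y) x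

/-- The matrix W(μ)ⱼₖ = ((2μ)⁻¹Δμ − (4μ²)⁻¹|∇μ|²)δⱼₖ + μ⁻²(∂ⱼμ)(∂ₖμ) − μ⁻¹∂ⱼ∂ₖμ. -/
def Wm (μ : V3 → ℝ) (x : V3) (j k : Fin 3) : ℝ :=
  ((2 * μ x)⁻¹ * lapR μ x - (4 * (μ x) ^ 2)⁻¹ * (∑ i, (pdR i μ x) ^ 2))
      * (if j = k then 1 else 0)
    + ((μ x) ^ 2)⁻¹ * pdR j μ x * pdR k μ x
    - (μ x)⁻¹ * pdR j (fun y => pdR k μ y) x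


/-- The point (γ₁(s), γ₂(s), t) on the cylindrical surface over the curve γ. -/
def ptC (γ : ℝ → Fin 2 → ℝ) (s t : ℝ) : V3 := ![γ s 0, γ s 1, t]

/-- The normal ν(s) = (γ₂'(s), −γ₁'(s), 0) to the curve γ, viewed in ℝ³. -/
def nuγ (γ : ℝ → Fin 2 → ℝ) (s : ℝ) : V3 :=
  ![deriv γ s 1, -deriv γ s 0, 0]

/-!
The first term vanishes since `a·ν = 0`; tangency also gives `a = α τ + a₃ e₃` with
`τ = (γ₁', γ₂', 0)` and `α = a·τ`, as `|τ| = 1`. So the second term only involves `∂_τ b·ν` and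
`∂₃ b·ν` with `ν` frozen at `s`. Differentiating `b(γ(s), t)·ν(s) = 0` in `t` gives `∂₃ b·ν = 0`,
and in `s` gives `∂_τ b·ν = -b·ν' = -κ (b·τ)`. Hence the left side is
`κ α conj (b·τ) = κ (a₁ conj b₁ + a₂ conj b₂)`.
-/

lemma fderiv_apply_eq_sum_pd (f : V3 → ℂ) (x v : V3) :
    fderiv ℝ f x v = ∑ k, (v k : ℂ) * pd k f x := by
  conv_lhs => rw [pi_eq_sum_univ' v, map_sum]
  refine Finset.sum_congr rfl fun k _ => ?_
  rw [ContinuousLinearMap.map_smul, Complex.real_smul]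
  rfl

lemma sum_pd_mul_add_eq_zero {b : V3 → C3} {c n : ℝ → V3} {v n' : V3} {s : ℝ}
    (hb : DifferentiableAt ℝ b (c s)) (hc : HasDerivAt c v s) (hn : HasDerivAt n n' s)
    (h : ∀ u, ∑ k, b (c u) k * (n u k : ℂ) = 0) :
    ∑ k, ((∑ i, (v i : ℂ) * pd i (fun y => b y k) (c s)) * n s k + b (c s) k * n' k) = 0 := by
  have hderiv : HasDerivAt (fun u => ∑ k, b (c u) k * (n u k : ℂ))
      (∑ k, (fderiv ℝ (fun y => b y k) (c s) v * n s k + b (c s) k * n' k)) s :=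
    HasDerivAt.fun_sum fun k _ =>
      ((differentiableAt_pi.mp hb k).hasFDerivAt.comp_hasDerivAt s hc).mul
        (hasDerivAt_pi.mp hn k).ofReal_comp
  simp only [h, fderiv_apply_eq_sum_pd] at hderiv
  exact ((hasDerivAt_const s 0).unique hderiv).symm

section Curve

variable {γ : ℝ → Fin 2 → ℝ} {s : ℝ}

lemma hasDerivAt_ptC_left (hγ : DifferentiableAt ℝ γ s) (t : ℝ) :
    HasDerivAt (fun u => ptC γ u t) ![deriv γ s 0, deriv γ s 1, 0] s := by
  have hγi (i : Fin 2) := hasDerivAt_pi.mp hγ.hasDerivAt i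
  refine hasDerivAt_pi.mpr fun i => ?_
  fin_cases i
  · exact hγi 0
  · exact hγi 1
  · exact hasDerivAt_const s t

lemma hasDerivAt_ptC_right (t : ℝ) : HasDerivAt (ptC γ s) (Pi.single 2 1) t := by
  refine hasDerivAt_pi.mpr fun i => ?_
  fin_cases i
  · exact hasDerivAt_const t (γ s 0)
  · exact hasDerivAt_const t (γ s 1)
  · exact hasDerivAt_id t

lemma hasDerivAt_nuγ {κ : ℝ} (hγ' : DifferentiableAt ℝ (deriv γ) s)
    (hκ : deriv (fun u => deriv γ u 1) s = κ * deriv γ s 0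
      ∧ -deriv (fun u => deriv γ u 0) s = κ * deriv γ s 1) :
    HasDerivAt (nuγ γ) (κ • ![deriv γ s 0, deriv γ s 1, 0]) s := by
  have hγ'i (i : Fin 2) := hasDerivAt_pi.mp hγ'.hasDerivAt i
  refine hasDerivAt_pi.mpr fun i => ?_
  fin_cases i
  · simpa [nuγ, ← hκ.1, (hγ'i 1).deriv] using hγ'i 1
  · simpa [nuγ, ← hκ.2, (hγ'i 0).deriv] using (hγ'i 0).fun_neg
  · simpa [nuγ] using hasDerivAt_const s (0 : ℝ)

end Curve

/-- Here `c` plays the unit tangent `γ'(s)` and `D k j` the partial derivative `∂ₖbⱼ`. -/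
lemma sum_mul_conj_div_sub_eq (c : Fin 2 → ℝ) (κ : ℝ) (a b : C3) (D : Fin 3 → Fin 3 → ℂ)
    (hc : c 0 ^ 2 + c 1 ^ 2 = 1)
    (ha : ∑ k, a k * (![c 1, -c 0, 0] k : ℂ) = 0)
    (hs : ∑ k, ((∑ i, (![c 0, c 1, 0] i : ℂ) * D i k) * (![c 1, -c 0, 0] k : ℂ)
      + b k * ((κ • ![c 0, c 1, 0] : V3) k : ℂ)) = 0)
    (ht : ∑ k, D 2 k * (![c 1, -c 0, 0] k : ℂ) = 0) :
    ∑ k, (![c 1, -c 0, 0] k : ℂ) * a k * (starRingEnd ℂ) (∑ j, D j j)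
      - ∑ j, ∑ k, (![c 1, -c 0, 0] j : ℂ) * a k * (starRingEnd ℂ) (D k j)
    = (κ : ℂ) * (a 0 * (starRingEnd ℂ) (b 0) + a 1 * (starRingEnd ℂ) (b 1)) := by
  have hs' := congrArg (starRingEnd ℂ) hs
  have ht' := congrArg (starRingEnd ℂ) ht
  have hc' : (c 0 : ℂ) ^ 2 + (c 1 : ℂ) ^ 2 = 1 := by exact_mod_cast hc
  simp only [Fin.sum_univ_three, Matrix.cons_val_zero, Matrix.cons_val_one, Matrix.cons_val,
    Pi.smul_apply, smul_eq_mul, ofReal_neg, ofReal_zero, ofReal_mul, map_add, map_mul, map_neg,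
    map_zero, conj_ofReal, mul_neg, neg_mul, mul_zero, zero_mul, add_zero] at ha hs' ht' ⊢
  set X := (c 1 : ℂ) * starRingEnd ℂ (D 0 0) - c 0 * starRingEnd ℂ (D 0 1) + κ * starRingEnd ℂ (b 0)
  set Y := (c 1 : ℂ) * starRingEnd ℂ (D 1 0) - c 0 * starRingEnd ℂ (D 1 1) + κ * starRingEnd ℂ (b 1)
  linear_combination (starRingEnd ℂ (D 0 0) + starRingEnd ℂ (D 1 1) + starRingEnd ℂ (D 2 2)
      - c 1 * X + c 0 * Y) * ha - a 2 * ht' - (a 0 * c 0 + a 1 * c 1) * hs'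
    + (a 0 * X + a 1 * Y) * hc'

theorem statement3_general (γ : ℝ → Fin 2 → ℝ) (κ : ℝ → ℝ)
    (hγ : ContDiff ℝ 2 γ)
    (hunit : ∀ s, (deriv γ s 0) ^ 2 + (deriv γ s 1) ^ 2 = 1)
    (hκ : ∀ s, deriv (fun u => deriv γ u 1) s = κ s * deriv γ s 0
             ∧ -deriv (fun u => deriv γ u 0) s = κ s * deriv γ s 1)
    (a b : V3 → C3) (U : Set V3) (hU : IsOpen U)
    (hSU : ∀ s t : ℝ, ptC γ s t ∈ U)
    (hb : ContDiffOn ℝ 1 b U)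
    (han : ∀ s t : ℝ, ∑ k, a (ptC γ s t) k * (nuγ γ s k : ℂ) = 0)
    (hbn : ∀ s t : ℝ, ∑ k, b (ptC γ s t) k * (nuγ γ s k : ℂ) = 0)
    (s t : ℝ) :
    ∑ k, (nuγ γ s k : ℂ) * a (ptC γ s t) k * (starRingEnd ℂ) (vdiv b (ptC γ s t))
      - ∑ j, ∑ k, (nuγ γ s j : ℂ) * a (ptC γ s t) k
          * (starRingEnd ℂ) (pd k (fun y => b y j) (ptC γ s t))
    = (κ s : ℂ) * (a (ptC γ s t) 0 * (starRingEnd ℂ) (b (ptC γ s t) 0)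
        + a (ptC γ s t) 1 * (starRingEnd ℂ) (b (ptC γ s t) 1)) := by
  have hbx : DifferentiableAt ℝ b (ptC γ s t) :=
    (hb.contDiffAt (hU.mem_nhds (hSU s t))).differentiableAt one_ne_zero
  have hγ' : Differentiable ℝ (deriv γ) :=
    (hγ.iterate_deriv' 1 1).differentiable one_ne_zero
  have hs := sum_pd_mul_add_eq_zero (c := fun u => ptC γ u t) hbx
    (hasDerivAt_ptC_left (hγ.differentiable two_ne_zero s) t)
    (hasDerivAt_nuγ (hγ' s) (hκ s)) (hbn · t)
  have ht := sum_pd_mul_add_eq_zero (n := fun _ => nuγ γ s) hbx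
    (hasDerivAt_ptC_right t) (hasDerivAt_const t _) (hbn s)
  exact sum_mul_conj_div_sub_eq (deriv γ s) (κ s) (a (ptC γ s t)) (b (ptC γ s t))
    (fun k j => pd k (fun y => b y j) (ptC γ s t)) (hunit s) (han s t) hs
    (by simpa [Fin.sum_univ_three, nuγ] using ht)

/-- boundary identity I(x) = κ(s)·⟨P a, b⟩ for fields with vanishing normal
components on the cylindrical surface over a unit-speed curve γ. -/
theorem statement3 (γ : ℝ → Fin 2 → ℝ) (κ : ℝ → ℝ)
    (hγ : ContDiff ℝ 2 γ)
    (hunit : ∀ s, (deriv γ s 0) ^ 2 + (deriv γ s 1) ^ 2 = 1)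
    (hκ : ∀ s, deriv (fun u => deriv γ u 1) s = κ s * deriv γ s 0
             ∧ -deriv (fun u => deriv γ u 0) s = κ s * deriv γ s 1)
    (a b : V3 → C3) (U : Set V3) (hU : IsOpen U)
    (hSU : ∀ s t : ℝ, ptC γ s t ∈ U)
    (ha : ContDiffOn ℝ 1 a U) (hb : ContDiffOn ℝ 1 b U)
    (han : ∀ s t : ℝ, ∑ k, a (ptC γ s t) k * (nuγ γ s k : ℂ) = 0)
    (hbn : ∀ s t : ℝ, ∑ k, b (ptC γ s t) k * (nuγ γ s k : ℂ) = 0)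
    (s t : ℝ) :
    ∑ k, (nuγ γ s k : ℂ) * a (ptC γ s t) k * (starRingEnd ℂ) (vdiv b (ptC γ s t))
      - ∑ j, ∑ k, (nuγ γ s j : ℂ) * a (ptC γ s t) k
          * (starRingEnd ℂ) (pd k (fun y => b y j) (ptC γ s t))
    = (κ s : ℂ) * (a (ptC γ s t) 0 * (starRingEnd ℂ) (b (ptC γ s t) 0)
        + a (ptC γ s t) 1 * (starRingEnd ℂ) (b (ptC γ s t) 1)) :=
  statement3_general γ κ hγ hunit hκ a b U hU hSU hb han hbn s t
end
end

section
/- Let a, b : ℝ³ → ℂ³ be C² up to the boundary of Π', with a of compact axial support, and suppose that on each open face of ∂Π' either (i) ⟨a, ν⟩ = ⟨b, ν⟩ = 0, or (ii) a = ⟨a, ν⟩·ν and b = ⟨b, ν⟩·ν, where ν is the outward unit normal of that face. Then ∫_{Π'} ⟨curl a, curl b⟩ dx = ∫_{Π'} Σⱼ ⟨∂ⱼa, ∂ⱼb⟩ dx − ∫_{Π'} (div a)·conj(div b) dx (the boundary term vanishes since each face is flat). -/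
noncomputable section

open MeasureTheory Real Complex

/-- The solid infinite cylinder Π' = (0, l₁) × (0, l₂) × ℝ with rectangular cross-section. -/
def Rect (l1 l2 : ℝ) : Set V3 := {x | 0 < x 0 ∧ x 0 < l1 ∧ 0 < x 1 ∧ x 1 < l2}

/-- The normal component ⟨z, n⟩ of z ∈ ℂ³ with respect to a real unit vector n. -/
def ncompV (n : V3) (z : C3) : ℂ := ∑ k, z k * (n k : ℂ)

/-- Boundary condition on a face F with outward unit normal n: either both normal components
of a and b vanish on F, or both tangential components of a and b vanish on F. -/
def BCface (a b : V3 → C3) (F : Set V3) (n : V3) : Prop :=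
  (∀ x ∈ F, ncompV n (a x) = 0 ∧ ncompV n (b x) = 0) ∨
  (∀ x ∈ F, (∀ i, a x i = ncompV n (a x) * (n i : ℂ)) ∧
            (∀ i, b x i = ncompV n (b x) * (n i : ℂ)))


/-!
Pointwise, `Σⱼ ⟨∂ⱼa, ∂ⱼb⟩ − div a · conj (div b) − ⟨curl a, curl b⟩` is the divergence of
`F = (a·∇) b̄ − (div b̄) a`, by the symmetry of second derivatives. As `a` has compact axial
support, the integral over `Π'` is one over a box, which the divergence theorem turns into the
flux of `F` through the faces of the box. On the two caps `a = 0`. On a side face with normal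
`±eⱼ`, if `aⱼ = bⱼ = 0` there, every term of `Fⱼ` contains `aⱼ` or a derivative of `b̄ⱼ` along
the face; if instead the tangential components of `a` and `b` vanish there, `aⱼ ∂ⱼb̄ⱼ` cancels
and every remaining term contains a tangential component of `a` or a derivative of one of `b̄`
along the face. Either way `Fⱼ = 0` on the face.
-/

open Filter Set Topology

section PartialDerivatives

variable {f g : V3 → ℂ} {x : V3}

lemma pd_sub (hf : DifferentiableAt ℝ f x) (hg : DifferentiableAt ℝ g x) (k : Fin 3) :
    pd k (fun y => f y - g y) x = pd k f x - pd k g x := by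
  rw [pd, fderiv_fun_sub hf hg]
  rfl

lemma pd_mul (hf : DifferentiableAt ℝ f x) (hg : DifferentiableAt ℝ g x) (k : Fin 3) :
    pd k (fun y => f y * g y) x = pd k f x * g x + f x * pd k g x := by
  rw [pd, fderiv_fun_mul hf hg]
  simp only [pd, add_apply, smul_apply, smul_eq_mul]
  ring

lemma pd_sum {ι : Type*} (s : Finset ι) {f : ι → V3 → ℂ}
    (h : ∀ i ∈ s, DifferentiableAt ℝ (f i) x) (k : Fin 3) :
    pd k (fun y => ∑ i ∈ s, f i y) x = ∑ i ∈ s, pd k (f i) x := by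
  rw [pd, fderiv_fun_sum h]
  simp [pd]

lemma pd_conj (hf : DifferentiableAt ℝ f x) (k : Fin 3) :
    pd k (fun y => (starRingEnd ℂ) (f y)) x = (starRingEnd ℂ) (pd k f x) := by
  have hc : HasFDerivAt (fun y => (starRingEnd ℂ) (f y))
      (Complex.conjCLE.toContinuousLinearMap.comp (fderiv ℝ f x)) x :=
    Complex.conjCLE.toContinuousLinearMap.hasFDerivAt.comp x hf.hasFDerivAt
  rw [pd, hc.fderiv]
  rfl

lemma pd_eq_zero_of_eventuallyEq_zero (h : f =ᶠ[𝓝 x] 0) (k : Fin 3) : pd k f x = 0 := by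
  rw [pd, h.fderiv_eq]
  simp

lemma pd_eq_zero_of_eventually_line (hf : DifferentiableAt ℝ f x) {k : Fin 3}
    (h : ∀ᶠ t : ℝ in 𝓝 0, f (x + t • Pi.single k 1) = 0) : pd k f x = 0 := by
  have h' : (fun t : ℝ => f (x + t • Pi.single k 1)) =ᶠ[𝓝 0] fun _ => 0 := h
  rw [pd, ← hf.lineDeriv_eq_fderiv, lineDeriv, h'.deriv_eq, deriv_const]

end PartialDerivatives

section SecondDerivatives

variable {U : Set V3} {h : V3 → ℂ} {x : V3}

lemma differentiableAt_of_contDiffOn {n : WithTop ℕ∞} (hU : IsOpen U) (hh : ContDiffOn ℝ n h U)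
    (hn : n ≠ 0) (hx : x ∈ U) : DifferentiableAt ℝ h x :=
  (hh.contDiffAt (hU.mem_nhds hx)).differentiableAt hn

lemma contDiffOn_pd {n : ℕ} (hU : IsOpen U) (hh : ContDiffOn ℝ (n + 1) h U) (k : Fin 3) :
    ContDiffOn ℝ n (pd k h) U :=
  (hh.fderiv_of_isOpen hU le_rfl).clm_apply contDiffOn_const

lemma pd_pd_comm (hU : IsOpen U) (hh : ContDiffOn ℝ 2 h U) (hx : x ∈ U) (i k : Fin 3) :
    pd i (pd k h) x = pd k (pd i h) x := by
  have hd : DifferentiableAt ℝ (fderiv ℝ h) x :=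
    ((hh.fderiv_of_isOpen (m := 1) hU (by norm_num)).contDiffAt (hU.mem_nhds hx)).differentiableAt
      one_ne_zero
  have hpd : ∀ i k, pd i (pd k h) x = fderiv ℝ (fderiv ℝ h) x (Pi.single i 1) (Pi.single k 1) :=
    fun i k => by
      change fderiv ℝ (fun y => fderiv ℝ h y (Pi.single k 1)) x _ = _
      rw [fderiv_clm_apply hd (differentiableAt_const _)]
      simp
  rw [hpd, hpd]
  exact ((hh.contDiffAt (hU.mem_nhds hx)).isSymmSndFDerivAt (by simp)).eq _ _

end SecondDerivatives

def flux (u w : V3 → C3) (x : V3) : C3 := fun i =>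
  (∑ k, u x k * pd k (fun y => w y i) x) - u x i * ∑ k, pd k (fun y => w y k) x

def vconj (b : V3 → C3) : V3 → C3 := fun y i => (starRingEnd ℂ) (b y i)

section Flux

variable {U : Set V3} {u w : V3 → C3} {x : V3}

lemma flux_eq_zero_of_eq_zero (hu : u x = 0) : flux u w x = 0 := by
  ext i
  simp [flux, hu]

lemma contDiffOn_flux (hU : IsOpen U) (hu : ∀ j, ContDiffOn ℝ 1 (fun y => u y j) U)
    (hw : ∀ j, ContDiffOn ℝ 2 (fun y => w y j) U) (i : Fin 3) :
    ContDiffOn ℝ 1 (fun y => flux u w y i) U :=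
  (ContDiffOn.sum fun k _ => (hu k).mul (contDiffOn_pd hU (hw i) k)).sub
    ((hu i).mul (ContDiffOn.sum fun k _ => contDiffOn_pd hU (hw k) k))

lemma pd_flux (hU : IsOpen U) (hu : ∀ j, ContDiffOn ℝ 1 (fun y => u y j) U)
    (hw : ∀ j, ContDiffOn ℝ 2 (fun y => w y j) U) (hx : x ∈ U) (i : Fin 3) :
    pd i (fun y => flux u w y i) x
      = (∑ k, (pd i (fun y => u y k) x * pd k (fun y => w y i) x
            + u x k * pd i (pd k (fun y => w y i)) x))
        - (pd i (fun y => u y i) x * ∑ k, pd k (fun y => w y k) x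
            + u x i * ∑ k, pd i (pd k (fun y => w y k)) x) := by
  have du : ∀ k, DifferentiableAt ℝ (fun y => u y k) x :=
    fun k => differentiableAt_of_contDiffOn hU (hu k) one_ne_zero hx
  have dw : ∀ j k, DifferentiableAt ℝ (pd k (fun y => w y j)) x :=
    fun j k => differentiableAt_of_contDiffOn hU (contDiffOn_pd hU (hw j) k) one_ne_zero hx
  have dprod : ∀ k, DifferentiableAt ℝ (fun y => u y k * pd k (fun y' => w y' i) y) x :=
    fun k => (du k).mul (dw i k)
  have ddiv : DifferentiableAt ℝ (fun y => ∑ k, pd k (fun y' => w y' k) y) x :=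
    DifferentiableAt.fun_sum fun k _ => dw k k
  have dlast : DifferentiableAt ℝ (fun y => u y i * ∑ k, pd k (fun y' => w y' k) y) x :=
    (du i).mul ddiv
  simp only [flux]
  rw [pd_sub (DifferentiableAt.fun_sum fun k _ => dprod k) dlast,
    pd_sum _ fun k _ => dprod k, pd_mul (du i) ddiv, pd_sum _ fun k _ => dw k k]
  simp only [pd_mul (du _) (dw i _)]

lemma sum_pd_flux (hU : IsOpen U) (hu : ∀ j, ContDiffOn ℝ 1 (fun y => u y j) U)
    (hw : ∀ j, ContDiffOn ℝ 2 (fun y => w y j) U) (hx : x ∈ U) :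
    ∑ i, pd i (fun y => flux u w y i) x
      = (∑ i, ∑ k, pd i (fun y => u y k) x * pd k (fun y => w y i) x)
        - (∑ i, pd i (fun y => u y i) x) * ∑ k, pd k (fun y => w y k) x := by
  have hsym : ∀ i k j, pd i (pd k (fun y => w y j)) x = pd k (pd i (fun y => w y j)) x :=
    fun i k j => pd_pd_comm hU (hw j) hx i k
  simp only [pd_flux hU hu hw hx, Fin.sum_univ_three]
  linear_combination u x 0 * hsym 1 0 1 + u x 0 * hsym 2 0 2 + u x 1 * hsym 0 1 0
    + u x 1 * hsym 2 1 2 + u x 2 * hsym 0 2 0 + u x 2 * hsym 1 2 1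

end Flux

lemma contDiffOn_vconj {U : Set V3} {b : V3 → C3} {n : WithTop ℕ∞}
    (hb : ∀ j, ContDiffOn ℝ n (fun y => b y j) U) (j : Fin 3) :
    ContDiffOn ℝ n (fun y => vconj b y j) U :=
  Complex.conjCLE.toContinuousLinearMap.contDiff.comp_contDiffOn (hb j)

lemma sum_hinner_pdV_sub_eq_sum_pd_flux {U : Set V3} {a b : V3 → C3} {x : V3} (hU : IsOpen U)
    (ha : ∀ j, ContDiffOn ℝ 2 (fun y => a y j) U) (hb : ∀ j, ContDiffOn ℝ 2 (fun y => b y j) U)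
    (hx : x ∈ U) :
    (∑ j, hinner (pdV j a x) (pdV j b x)) - vdiv a x * (starRingEnd ℂ) (vdiv b x)
        - hinner (vcurl a x) (vcurl b x)
      = ∑ i, pd i (fun y => flux a (vconj b) y i) x := by
  rw [sum_pd_flux hU (fun j => (ha j).of_le (by norm_num)) (contDiffOn_vconj hb) hx]
  have hconj : ∀ j k, pd k (fun y => vconj b y j) x = (starRingEnd ℂ) (pd k (fun y => b y j) x) :=
    fun j k => pd_conj (differentiableAt_of_contDiffOn hU (hb j) two_ne_zero hx) k
  simp only [hconj, hinner, pdV, vdiv, vcurl, Fin.sum_univ_three, Matrix.cons_val_zero,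
    Matrix.cons_val_one, Matrix.cons_val_two, Matrix.head_cons, Matrix.tail_cons, map_sub, map_add]
  ring

section Faces

lemma flux_apply_eq_zero_of_face {u w : V3 → C3} {x : V3} {j : Fin 3} {F : Set V3}
    (hw : ∀ i, DifferentiableAt ℝ (fun y => w y i) x) (hx : x ∈ F)
    (hline : ∀ k ≠ j, ∀ᶠ t : ℝ in 𝓝 0, x + t • Pi.single k 1 ∈ F)
    (hbc : (∀ y ∈ F, u y j = 0 ∧ w y j = 0) ∨ (∀ y ∈ F, ∀ i ≠ j, u y i = 0 ∧ w y i = 0)) :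
    flux u w x j = 0 := by
  rcases hbc with hnormal | htangential
  · have hpd : ∀ k ≠ j, pd k (fun y => w y j) x = 0 := fun k hk =>
      pd_eq_zero_of_eventually_line (hw j) ((hline k hk).mono fun t ht => (hnormal _ ht).2)
    have hsum : ∑ k, u x k * pd k (fun y => w y j) x = u x j * pd j (fun y => w y j) x :=
      Finset.sum_eq_single j (fun k _ hk => by rw [hpd k hk, mul_zero]) (by simp)
    simp [flux, hsum, (hnormal x hx).1]
  · have hu : ∀ k ≠ j, u x k = 0 := fun k hk => (htangential x hx k hk).1
    have hpd : ∀ k ≠ j, pd k (fun y => w y k) x = 0 := fun k hk =>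
      pd_eq_zero_of_eventually_line (hw k) ((hline k hk).mono fun t ht => (htangential _ ht k hk).2)
    have hsum : ∑ k, u x k * pd k (fun y => w y j) x = u x j * pd j (fun y => w y j) x :=
      Finset.sum_eq_single j (fun k _ hk => by rw [hu k hk, zero_mul]) (by simp)
    have hdiv : ∑ k, pd k (fun y => w y k) x = pd j (fun y => w y j) x :=
      Finset.sum_eq_single j (fun k _ hk => hpd k hk) (by simp)
    simp [flux, hsum, hdiv]

lemma BCface.normal_or_tangential {a b : V3 → C3} {F : Set V3} {n : V3} {j : Fin 3}
    (hnj : n j ≠ 0) (hn : ∀ i ≠ j, n i = 0) (h : BCface a b F n) :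
    (∀ y ∈ F, a y j = 0 ∧ b y j = 0) ∨ (∀ y ∈ F, ∀ i ≠ j, a y i = 0 ∧ b y i = 0) := by
  have hncomp : ∀ z : C3, ncompV n z = z j * (n j : ℂ) := fun z =>
    Finset.sum_eq_single j (fun i _ hi => by simp [hn i hi]) (by simp)
  have hnj' : (n j : ℂ) ≠ 0 := Complex.ofReal_ne_zero.2 hnj
  refine h.imp (fun h y hy => ?_) (fun h y hy i hi => ?_)
  · simpa [hncomp, hnj'] using h y hy
  · obtain ⟨ha, hb⟩ := h y hy
    exact ⟨by rw [ha i, hn i hi]; simp, by rw [hb i, hn i hi]; simp⟩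

variable {j j' : Fin 3} {c l : ℝ}

lemma eventually_add_smul_single_mem_face {x : V3}
    (hx : x ∈ {y : V3 | y j = c ∧ 0 < y j' ∧ y j' < l}) {k : Fin 3} (hk : k ≠ j) :
    ∀ᶠ t : ℝ in 𝓝 0, x + t • Pi.single k 1 ∈ {y : V3 | y j = c ∧ 0 < y j' ∧ y j' < l} := by
  have hopen : IsOpen {y : V3 | 0 < y j' ∧ y j' < l} :=
    (isOpen_lt continuous_const (continuous_apply j')).inter
      (isOpen_lt (continuous_apply j') continuous_const)
  have hline : Tendsto (fun t : ℝ => x + t • (Pi.single k 1 : V3)) (𝓝 0) (𝓝 x) := by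
    simpa using ((continuous_id.smul continuous_const).const_add x).tendsto (0 : ℝ)
  filter_upwards [hline.eventually_mem (hopen.mem_nhds hx.2)] with t ht
  exact ⟨by simp [Pi.single_eq_of_ne hk.symm, hx.1], ht⟩

lemma flux_vconj_apply_eq_zero_of_BCface {a b : V3 → C3} {n : V3} (hnj : n j ≠ 0)
    (hn : ∀ i ≠ j, n i = 0) (hbc : BCface a b {y : V3 | y j = c ∧ 0 < y j' ∧ y j' < l} n)
    {x : V3} (hx : x ∈ {y : V3 | y j = c ∧ 0 < y j' ∧ y j' < l})
    (hb : ∀ i, DifferentiableAt ℝ (fun y => b y i) x) :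
    flux a (vconj b) x j = 0 := by
  refine flux_apply_eq_zero_of_face (fun i => (hb i).star) hx
    (fun k hk => eventually_add_smul_single_mem_face hx hk) ?_
  simpa [vconj] using hbc.normal_or_tangential hnj hn

end Faces

lemma insertNth_mem_Icc_of_mem_pi_Ioo {n : ℕ} {lo hi : Fin (n + 1) → ℝ} (hle : lo ≤ hi)
    {i : Fin (n + 1)} {c : ℝ} (hc : c = lo i ∨ c = hi i) {y : Fin n → ℝ}
    (hy : y ∈ univ.pi fun k => Ioo ((lo ∘ i.succAbove) k) ((hi ∘ i.succAbove) k)) :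
    i.insertNth c y ∈ Icc lo hi := by
  have hci : lo i ≤ c ∧ c ≤ hi i := by rcases hc with rfl | rfl <;> simp [hle i]
  have hy' : ∀ k, lo (i.succAbove k) ≤ y k ∧ y k ≤ hi (i.succAbove k) :=
    fun k => ⟨(hy k (mem_univ k)).1.le, (hy k (mem_univ k)).2.le⟩
  constructor <;> intro k <;> induction k using i.succAboveCases <;> simp [hci, hy']

theorem integral_sum_pd_eq_zero_of_boundary {lo hi : V3} (hle : lo ≤ hi) {U : Set V3}
    (hU : IsOpen U) (hsub : Icc lo hi ⊆ U) {F : V3 → C3}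
    (hF : ∀ i, ContDiffOn ℝ 1 (fun y => F y i) U)
    (hbd : ∀ i, ∀ x ∈ Icc lo hi, (x i = lo i ∨ x i = hi i) →
      (∀ k ≠ i, x k ∈ Ioo (lo k) (hi k)) → F x i = 0) :
    ∫ x in Icc lo hi, ∑ i, pd i (fun y => F y i) x = 0 := by
  have hface : ∀ i c, (c = lo i ∨ c = hi i) →
      ∫ y in Icc (lo ∘ i.succAbove) (hi ∘ i.succAbove), F (i.insertNth c y) i = 0 := by
    intro i c hc
    rw [← setIntegral_congr_set (volume_pi (α := fun _ : Fin 2 => ℝ) ▸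
      Measure.univ_pi_Ioo_ae_eq_Icc)]
    refine setIntegral_eq_zero_of_forall_eq_zero fun y hy => hbd i _
      (insertNth_mem_Icc_of_mem_pi_Ioo hle hc hy) (by simpa using hc) fun k hk => ?_
    obtain ⟨m, rfl⟩ := Fin.exists_succAbove_eq hk
    simpa using hy m (mem_univ m)
  have hcont : ContinuousOn (fun x => ∑ i, pd i (fun y => F y i) x) U :=
    continuousOn_finsetSum _ fun i _ => (contDiffOn_pd (n := 0) hU (hF i) i).continuousOn
  rw [show (fun x => ∑ i, pd i (fun y => F y i) x)
      = fun x => ∑ i, fderiv ℝ (fun y => F y i) x (Pi.single i 1) from rfl,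
    integral_divergence_of_hasFDerivAt_off_countable' lo hi hle (fun i y => F y i) _ ∅
      countable_empty (fun i => ((hF i).continuousOn).mono hsub)
      (fun x hx i => (differentiableAt_of_contDiffOn hU (hF i) one_ne_zero
        (hsub (Ioo_subset_Icc_self (pi_univ_Ioo_subset _ _ hx.1)))).hasFDerivAt)
      ((hcont.mono hsub).integrableOn_compact isCompact_Icc)]
  exact Finset.sum_eq_zero fun i _ => by
    rw [hface i _ (Or.inr rfl), hface i _ (Or.inl rfl), sub_zero]

section Rect

variable {l1 l2 : ℝ}

lemma rect_eq_pi (l1 l2 : ℝ) : Rect l1 l2 = univ.pi ![Ioo 0 l1, Ioo 0 l2, univ] := by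
  ext x
  simp [Rect, Fin.forall_fin_succ, and_assoc]

lemma Icc_subset_closure_rect (hl1 : 0 < l1) (hl2 : 0 < l2) (R : ℝ) :
    Icc ![0, 0, -R] ![l1, l2, R] ⊆ closure (Rect l1 l2) := by
  rw [rect_eq_pi, closure_pi_set]
  intro x hx i _
  fin_cases i
  · simpa [closure_Ioo hl1.ne] using ⟨hx.1 0, hx.2 0⟩
  · simpa [closure_Ioo hl2.ne] using ⟨hx.1 1, hx.2 1⟩
  · simp

lemma pi_Ioo_subset_rect (R : ℝ) :
    (univ.pi fun i => Ioo (![0, 0, -R] i) (![l1, l2, R] i)) ⊆ Rect l1 l2 :=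
  fun _ hx => ⟨(hx 0 trivial).1, (hx 0 trivial).2, (hx 1 trivial).1, (hx 1 trivial).2⟩

lemma le_abs_of_mem_rect_diff_pi_Ioo {R : ℝ} {x : V3}
    (hx : x ∈ Rect l1 l2 \ univ.pi fun i => Ioo (![0, 0, -R] i) (![l1, l2, R] i)) :
    R ≤ |x 2| := by
  obtain ⟨⟨h0, h1, h2, h3⟩, hS⟩ := hx
  by_contra! hlt
  refine hS fun i _ => ?_
  fin_cases i <;> simp_all [abs_lt]

lemma measurableSet_rect : MeasurableSet (Rect l1 l2) := by
  rw [rect_eq_pi]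
  exact MeasurableSet.univ_pi fun i => by fin_cases i <;> simp [measurableSet_Ioo]

lemma setIntegral_rect_eq_Icc {g : V3 → ℂ} {R : ℝ} (hg : ∀ x, R ≤ |x 2| → g x = 0) :
    ∫ x in Rect l1 l2, g x = ∫ x in Icc ![0, 0, -R] ![l1, l2, R], g x := by
  rw [setIntegral_eq_of_subset_of_forall_sdiff_eq_zero measurableSet_rect (pi_Ioo_subset_rect R)
    fun x hx => hg x (le_abs_of_mem_rect_diff_pi_Ioo hx)]
  exact setIntegral_congr_set (volume_pi (α := fun _ : Fin 3 => ℝ) ▸ Measure.univ_pi_Ioo_ae_eq_Icc)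

lemma integrableOn_rect {g : V3 → ℂ} {R : ℝ} (hc : ContinuousOn g (Icc ![0, 0, -R] ![l1, l2, R]))
    (hg : ∀ x, R ≤ |x 2| → g x = 0) : IntegrableOn g (Rect l1 l2) :=
  ((hc.integrableOn_compact isCompact_Icc).mono_set
    ((pi_univ_Ioo_subset _ _).trans Ioo_subset_Icc_self)).of_forall_sdiff_eq_zero
    measurableSet_rect fun x hx => hg x (le_abs_of_mem_rect_diff_pi_Ioo hx)

end Rect

lemma flux_vconj_apply_eq_zero_of_mem_box_face {l1 l2 : ℝ} {a b : V3 → C3}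
    (hF1 : BCface a b {x : V3 | x 0 = 0 ∧ 0 < x 1 ∧ x 1 < l2} ![-1, 0, 0])
    (hF2 : BCface a b {x : V3 | x 0 = l1 ∧ 0 < x 1 ∧ x 1 < l2} ![1, 0, 0])
    (hF3 : BCface a b {x : V3 | x 1 = 0 ∧ 0 < x 0 ∧ x 0 < l1} ![0, -1, 0])
    (hF4 : BCface a b {x : V3 | x 1 = l2 ∧ 0 < x 0 ∧ x 0 < l1} ![0, 1, 0])
    {T R : ℝ} (hTR : T ≤ R) (hTa : ∀ x : V3, T ≤ |x 2| → a x = 0) {x : V3}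
    (hb : ∀ i, DifferentiableAt ℝ (fun y => b y i) x) (i : Fin 3)
    (hxi : x i = ![0, 0, -R] i ∨ x i = ![l1, l2, R] i)
    (hface : ∀ k ≠ i, x k ∈ Ioo (![0, 0, -R] k) (![l1, l2, R] k)) :
    flux a (vconj b) x i = 0 := by
  fin_cases i
  · have hx1 := hface 1 (by decide)
    have hn : ∀ n : ℝ, ∀ k ≠ 0, ![n, 0, 0] k = 0 := fun n k hk => by fin_cases k <;> simp_all
    rcases hxi with h | h
    · exact flux_vconj_apply_eq_zero_of_BCface (by simp) (hn _) hF1 ⟨h, hx1⟩ hb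
    · exact flux_vconj_apply_eq_zero_of_BCface (by simp) (hn _) hF2 ⟨h, hx1⟩ hb
  · have hx0 := hface 0 (by decide)
    have hn : ∀ n : ℝ, ∀ k ≠ 1, ![0, n, 0] k = 0 := fun n k hk => by fin_cases k <;> simp_all
    rcases hxi with h | h
    · exact flux_vconj_apply_eq_zero_of_BCface (by simp) (hn _) hF3 ⟨h, hx0⟩ hb
    · exact flux_vconj_apply_eq_zero_of_BCface (by simp) (hn _) hF4 ⟨h, hx0⟩ hb
  · have hR : R ≤ |x 2| := by rcases hxi with h | h <;> simp_all [le_abs_self]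
    simp [flux_eq_zero_of_eq_zero (hTa x (hTR.trans hR))]

lemma UpTo.exists_common {k : ℕ} {S : Set V3} {a b : V3 → C3} (ha : UpTo k S a)
    (hb : UpTo k S b) : ∃ U, IsOpen U ∧ closure S ⊆ U ∧
      (∀ j, ContDiffOn ℝ k (fun y => a y j) U) ∧ ∀ j, ContDiffOn ℝ k (fun y => b y j) U := by
  obtain ⟨Ua, hUa, hclA, haC⟩ := ha
  obtain ⟨Ub, hUb, hclB, hbC⟩ := hb
  exact ⟨Ua ∩ Ub, hUa.inter hUb, subset_inter hclA hclB,
    contDiffOn_pi.1 (haC.mono inter_subset_left), contDiffOn_pi.1 (hbC.mono inter_subset_right)⟩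

section Integrands

variable {U : Set V3} {a b : V3 → C3}

lemma pd_apply_eq_zero_of_lt_abs {T : ℝ} (hTa : ∀ x : V3, T ≤ |x 2| → a x = 0) {x : V3}
    (hx : T < |x 2|) (i j : Fin 3) : pd j (fun y => a y i) x = 0 := by
  refine pd_eq_zero_of_eventuallyEq_zero ?_ j
  filter_upwards [(isOpen_lt continuous_const (continuous_apply 2).abs).mem_nhds hx] with y hy
  simp [hTa y (le_of_lt hy)]

lemma continuousOn_pd_apply (hU : IsOpen U) (ha : ∀ j, ContDiffOn ℝ 2 (fun y => a y j) U)
    (i j : Fin 3) : ContinuousOn (pd j fun y => a y i) U :=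
  (contDiffOn_pd (n := 1) hU (ha i) j).continuousOn

lemma continuousOn_hinner_vcurl (hU : IsOpen U) (ha : ∀ j, ContDiffOn ℝ 2 (fun y => a y j) U)
    (hb : ∀ j, ContDiffOn ℝ 2 (fun y => b y j) U) :
    ContinuousOn (fun x => hinner (vcurl a x) (vcurl b x)) U := by
  have hpa := continuousOn_pd_apply hU ha
  have hpb := continuousOn_pd_apply hU hb
  simp only [hinner, vcurl, Fin.sum_univ_three, Matrix.cons_val_zero,
    Matrix.cons_val_one, Matrix.cons_val_two, Matrix.head_cons, Matrix.tail_cons]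
  fun_prop

lemma continuousOn_sum_hinner_pdV (hU : IsOpen U) (ha : ∀ j, ContDiffOn ℝ 2 (fun y => a y j) U)
    (hb : ∀ j, ContDiffOn ℝ 2 (fun y => b y j) U) :
    ContinuousOn (fun x => ∑ j, hinner (pdV j a x) (pdV j b x)) U := by
  have hpa := continuousOn_pd_apply hU ha
  have hpb := continuousOn_pd_apply hU hb
  simp only [hinner, pdV, Fin.sum_univ_three]
  fun_prop

lemma continuousOn_vdiv_mul_conj (hU : IsOpen U) (ha : ∀ j, ContDiffOn ℝ 2 (fun y => a y j) U)
    (hb : ∀ j, ContDiffOn ℝ 2 (fun y => b y j) U) :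
    ContinuousOn (fun x => vdiv a x * (starRingEnd ℂ) (vdiv b x)) U := by
  have hpa := continuousOn_pd_apply hU ha
  have hpb := continuousOn_pd_apply hU hb
  simp only [vdiv, Fin.sum_univ_three]
  fun_prop

end Integrands

lemma setIntegral_rect_green_defect_eq_zero {l1 l2 : ℝ} (hl1 : 0 < l1) (hl2 : 0 < l2)
    {a b : V3 → C3} {U : Set V3} (hU : IsOpen U) (hcl : closure (Rect l1 l2) ⊆ U)
    (ha : ∀ j, ContDiffOn ℝ 2 (fun y => a y j) U) (hb : ∀ j, ContDiffOn ℝ 2 (fun y => b y j) U)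
    {T : ℝ} (hT : 0 ≤ T) (hTa : ∀ x : V3, T ≤ |x 2| → a x = 0)
    (hF1 : BCface a b {x : V3 | x 0 = 0 ∧ 0 < x 1 ∧ x 1 < l2} ![-1, 0, 0])
    (hF2 : BCface a b {x : V3 | x 0 = l1 ∧ 0 < x 1 ∧ x 1 < l2} ![1, 0, 0])
    (hF3 : BCface a b {x : V3 | x 1 = 0 ∧ 0 < x 0 ∧ x 0 < l1} ![0, -1, 0])
    (hF4 : BCface a b {x : V3 | x 1 = l2 ∧ 0 < x 0 ∧ x 0 < l1} ![0, 1, 0]) :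
    ∫ x in Rect l1 l2, ((∑ j, hinner (pdV j a x) (pdV j b x))
      - vdiv a x * (starRingEnd ℂ) (vdiv b x) - hinner (vcurl a x) (vcurl b x)) = 0 := by
  have hbox := (Icc_subset_closure_rect hl1 hl2 (T + 1)).trans hcl
  have hfar : ∀ x : V3, T + 1 ≤ |x 2| → ∀ i j, pd j (fun y => a y i) x = 0 :=
    fun x hx => pd_apply_eq_zero_of_lt_abs hTa (by linarith)
  rw [setIntegral_rect_eq_Icc fun x hx => by
      simp [hinner, pdV, vdiv, vcurl, Fin.sum_univ_three, hfar x hx],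
    setIntegral_congr_fun measurableSet_Icc fun x hx =>
      sum_hinner_pdV_sub_eq_sum_pd_flux hU ha hb (hbox hx)]
  refine integral_sum_pd_eq_zero_of_boundary (fun i => by fin_cases i <;> simp <;> linarith)
    hU hbox (contDiffOn_flux hU (fun j => (ha j).of_le (by norm_num)) (contDiffOn_vconj hb))
    fun i x hx hxi hface => flux_vconj_apply_eq_zero_of_mem_box_face hF1 hF2 hF3 hF4
      (by linarith) hTa (fun j => differentiableAt_of_contDiffOn hU (hb j) two_ne_zero (hbox hx))
      i hxi hface

/-- in a cylinder with rectangular cross-section, the Green-type identity for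
curl holds without a boundary term. -/
theorem statement8 (l1 l2 : ℝ) (hl1 : 0 < l1) (hl2 : 0 < l2) (a b : V3 → C3)
    (ha : UpTo 2 (Rect l1 l2) a) (hb : UpTo 2 (Rect l1 l2) b) (has : AxialSupp a)
    (hF1 : BCface a b {x : V3 | x 0 = 0 ∧ 0 < x 1 ∧ x 1 < l2} ![-1, 0, 0])
    (hF2 : BCface a b {x : V3 | x 0 = l1 ∧ 0 < x 1 ∧ x 1 < l2} ![1, 0, 0])
    (hF3 : BCface a b {x : V3 | x 1 = 0 ∧ 0 < x 0 ∧ x 0 < l1} ![0, -1, 0])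
    (hF4 : BCface a b {x : V3 | x 1 = l2 ∧ 0 < x 0 ∧ x 0 < l1} ![0, 1, 0]) :
    ∫ x in Rect l1 l2, hinner (vcurl a x) (vcurl b x)
      = (∫ x in Rect l1 l2, ∑ j, hinner (pdV j a x) (pdV j b x))
        - ∫ x in Rect l1 l2, vdiv a x * (starRingEnd ℂ) (vdiv b x) := by
  obtain ⟨U, hU, hcl, ha2, hb2⟩ := ha.exists_common hb
  obtain ⟨T, hT, hTa⟩ := has
  have hbox := (Icc_subset_closure_rect hl1 hl2 (T + 1)).trans hcl
  have hfar : ∀ x : V3, T + 1 ≤ |x 2| → ∀ i j, pd j (fun y => a y i) x = 0 :=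
    fun x hx => pd_apply_eq_zero_of_lt_abs hTa (by linarith)
  have hI1 := integrableOn_rect ((continuousOn_hinner_vcurl hU ha2 hb2).mono hbox)
    fun x hx => by simp [hinner, vcurl, Fin.sum_univ_three, hfar x hx]
  have hI2 := integrableOn_rect ((continuousOn_sum_hinner_pdV hU ha2 hb2).mono hbox)
    fun x hx => by simp [hinner, pdV, hfar x hx]
  have hI3 := integrableOn_rect ((continuousOn_vdiv_mul_conj hU ha2 hb2).mono hbox)
    fun x hx => by simp [vdiv, hfar x hx]
  have hdefect := (integral_sub' (hI2.sub hI3) hI1).symm.trans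
    (setIntegral_rect_green_defect_eq_zero hl1 hl2 hU hcl ha2 hb2 hT.le hTa hF1 hF2 hF3 hF4)
  rw [integral_sub' hI2 hI3] at hdefect
  linear_combination -hdefect
end
end
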